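/- Let Δ be a nonevasive finite simplicial complex. Then Δ is contractible (has the homotopy type of a point). -/

import Mathlib

open scoped Classical

/-- An abstract simplicial complex as a finite family of nonempty finite faces,
closed under taking nonempty subsets, containing all its vertices as singletons. -/
def IsComplex {V : Type*} (K : Finset (Finset V)) : Prop :=
  (∀ σ ∈ K, σ.Nonempty) ∧ (∀ σ ∈ K, ∀ τ ⊆ σ, τ.Nonempty → τ ∈ K)

/-- The deletion of a vertex from a simplicial complex. -/
noncomputable def dlF {V : Type*} (K : Finset (Finset V)) (v : V) : Finset (Finset V) :=
  K.filter fun σ => v ∉ σ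

/-- The link of a vertex in a simplicial complex. -/
noncomputable def lkF {V : Type*} (K : Finset (Finset V)) (v : V) : Finset (Finset V) :=
  K.filter fun σ => v ∉ σ ∧ insert v σ ∈ K

/-- Nonevasiveness: a point is nonevasive, and `K` is nonevasive if some vertex has
nonevasive link and deletion. -/
inductive Nonevasive {V : Type*} : Finset (Finset V) → Prop
  | point (v : V) : Nonevasive {{v}}
  | step (K : Finset (Finset V)) (v : V) (hv : {v} ∈ K)
      (hlk : Nonevasive (lkF K v)) (hdl : Nonevasive (dlF K v)) : Nonevasive K

/-- Collapsibility: `K` can be reduced to a point by elementary collapses, where an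
elementary collapse removes a pair `(σ, τ)` with `σ` a proper face of exactly one face `τ`. -/
inductive Collapsible {V : Type*} : Finset (Finset V) → Prop
  | point (v : V) : Collapsible {{v}}
  | collapse (K : Finset (Finset V)) (σ τ : Finset V) (hσ : σ ∈ K) (hτ : τ ∈ K)
      (hst : σ ⊂ τ) (huniq : ∀ ρ ∈ K, σ ⊂ ρ → ρ = τ)
      (h : Collapsible (K \ {σ, τ})) : Collapsible K

/-- The order complex of the subposet `S` of `P`: faces are the nonempty chains in `S`. -/
noncomputable def orderComplexOn (P : Type*) [Fintype P] [PartialOrder P] (S : Set P) :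
    Finset (Finset P) :=
  Finset.univ.filter fun σ => σ.Nonempty ∧ ↑σ ⊆ S ∧ IsChain (· ≤ ·) (σ : Set P)

/-- The geometric realization of a finite simplicial complex on vertex set V, as a
subspace of V → ℝ. -/
def realization {V : Type*} [Fintype V] (K : Finset (Finset V)) : Set (V → ℝ) :=
  {f | (∀ v, 0 ≤ f v) ∧ (∑ v, f v) = 1 ∧
    (Finset.univ.filter fun v => f v ≠ 0) ∈ K}

/-!
Induction on nonevasiveness. At a vertex `v`, `|K|` is the union of `|dl v|` and the closed
star of `v`, the image of the cone on `|lk v|` under `(z, s) ↦ s • v + (1 - s) • z`; the two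
pieces meet in `|lk v|`, at height `0`. Contracting `|lk v|` inside the cone while lowering the
height gives a homotopy, fixed on `|dl v|`, from the identity to a map into `|dl v|`. Thus the
identity of `|K|` factors up to homotopy through the contractible space `|dl v|`.
-/

open Set unitInterval

lemma continuousOn_range_of_continuous_comp {X Y Z : Type*} [TopologicalSpace X]
    [TopologicalSpace Y] [TopologicalSpace Z] [CompactSpace X] [T2Space Y] {φ : X → Y}
    {f : Y → Z} (hφ : Continuous φ) (hf : Continuous (f ∘ φ)) :
    ContinuousOn f (range φ) := by
  have hc : Continuous (rangeFactorization φ) := hφ.rangeFactorization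
  have hq : Topology.IsQuotientMap (rangeFactorization φ) :=
    hc.isClosedMap.isQuotientMap hc rangeFactorization_surjective
  exact continuousOn_iff_continuous_domRestrict.2 (hq.continuous_iff.2 hf)

lemma contractibleSpace_of_homotopic_id_comp {X Y : Type*} [TopologicalSpace X]
    [TopologicalSpace Y] [ContractibleSpace Y] (f : C(X, Y)) (g : C(Y, X))
    (h : (ContinuousMap.id X).Homotopic (g.comp f)) : ContractibleSpace X := by
  obtain ⟨x, hx⟩ := ((id_nullhomotopic Y).comp_left f).comp_right g
  exact (contractible_iff_id_nullhomotopic X).2 ⟨x, h.trans (by simpa using hx)⟩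

namespace unitInterval

noncomputable def ramp (t : I) : I := projIcc 0 1 zero_le_one (2 * t)

@[simp]
lemma ramp_zero : ramp 0 = 0 := by
  simp [ramp]

lemma ramp_of_half_le {t : I} (ht : 1 / 2 ≤ (t : ℝ)) : ramp t = 1 :=
  projIcc_of_right_le _ (by linarith)

@[simp]
lemma ramp_one : ramp 1 = 1 :=
  ramp_of_half_le (by norm_num)

@[fun_prop]
lemma continuous_ramp : Continuous ramp :=
  continuous_projIcc.comp (continuous_const.mul continuous_subtype_val)

end unitInterval

section IsComplex

variable {V : Type*} {K : Finset (Finset V)}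

lemma IsComplex.lkF (hK : IsComplex K) (v : V) : IsComplex (lkF K v) := by
  refine ⟨fun τ hτ => hK.1 τ (Finset.mem_filter.1 hτ).1, fun τ hτ ρ hρτ hρ => ?_⟩
  obtain ⟨hτK, hvτ, hvτK⟩ := Finset.mem_filter.1 hτ
  exact Finset.mem_filter.2 ⟨hK.2 τ hτK ρ hρτ hρ, fun hvρ => hvτ (hρτ hvρ),
    hK.2 _ hvτK _ (Finset.insert_subset_insert v hρτ) (Finset.insert_nonempty v ρ)⟩

lemma IsComplex.dlF (hK : IsComplex K) (v : V) : IsComplex (dlF K v) := by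
  refine ⟨fun τ hτ => hK.1 τ (Finset.mem_filter.1 hτ).1, fun τ hτ ρ hρτ hρ => ?_⟩
  obtain ⟨hτK, hvτ⟩ := Finset.mem_filter.1 hτ
  exact Finset.mem_filter.2 ⟨hK.2 τ hτK ρ hρτ hρ, fun hvρ => hvτ (hρτ hvρ)⟩

end IsComplex

section Realization

variable {V : Type*} [Fintype V] {K L : Finset (Finset V)}

lemma realization_mono (h : K ⊆ L) : realization K ⊆ realization L :=
  fun _ hf => ⟨hf.1, hf.2.1, h hf.2.2⟩

lemma realization_subset_stdSimplex : realization K ⊆ stdSimplex ℝ V :=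
  fun _ hf => ⟨hf.1, hf.2.1⟩

lemma mem_realization_of_support_subset (hK : IsComplex K) {f : V → ℝ}
    (hf : f ∈ stdSimplex ℝ V) {τ : Finset V} (hτ : τ ∈ K)
    (hsupp : ∀ u, f u ≠ 0 → u ∈ τ) :
    f ∈ realization K := by
  refine ⟨hf.1, hf.2, hK.2 τ hτ _ (fun u hu => hsupp u (Finset.mem_filter.1 hu).2) ?_⟩
  obtain ⟨u, -, hu⟩ := Finset.exists_ne_zero_of_sum_ne_zero (hf.2.symm ▸ one_ne_zero)
  exact ⟨u, Finset.mem_filter.2 ⟨Finset.mem_univ u, hu⟩⟩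

lemma realization_eq_biUnion (hK : IsComplex K) :
    realization K = ⋃ τ ∈ K, stdSimplex ℝ V ∩ {f | ∀ u ∉ τ, f u = 0} := by
  ext f
  simp only [mem_iUnion, mem_inter_iff, mem_ofPred_eq, exists_prop]
  constructor
  · intro hf
    exact ⟨_, hf.2.2, realization_subset_stdSimplex hf, fun u hu => by
      by_contra h
      exact hu (Finset.mem_filter.2 ⟨Finset.mem_univ u, h⟩)⟩
  · rintro ⟨τ, hτ, hf, hzero⟩
    exact mem_realization_of_support_subset hK hf hτ fun u hu => by_contra fun h => hu (hzero u h)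

lemma isCompact_realization (hK : IsComplex K) : IsCompact (realization K) := by
  rw [realization_eq_biUnion hK]
  refine K.finite_toSet.isCompact_biUnion fun τ _ => (isCompact_stdSimplex ℝ V).inter_right ?_
  simp only [ofPred_forall]
  exact isClosed_biInter fun u _ => isClosed_eq (continuous_apply u) continuous_const

lemma apply_eq_zero_of_apply_eq_one {f : V → ℝ} (hf : f ∈ stdSimplex ℝ V) {v : V}
    (hv : f v = 1) {u : V} (hu : u ≠ v) : f u = 0 := by
  have hrest : ∑ w ∈ Finset.univ.erase v, f w = 0 := by
    linarith [Finset.add_sum_erase Finset.univ f (Finset.mem_univ v), hf.2]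
  exact (Finset.sum_eq_zero_iff_of_nonneg fun w _ => hf.1 w).1 hrest u
    (Finset.mem_erase.2 ⟨hu, Finset.mem_univ u⟩)

lemma mem_realization_dlF_iff {v : V} {f : V → ℝ} :
    f ∈ realization (dlF K v) ↔ f ∈ realization K ∧ f v = 0 := by
  simp [realization, dlF, and_assoc]

lemma apply_eq_zero_of_mem_realization_lkF {v : V} {f : V → ℝ}
    (hf : f ∈ realization (lkF K v)) : f v = 0 := by
  by_contra h
  exact (Finset.mem_filter.1 hf.2.2).2.1 (Finset.mem_filter.2 ⟨Finset.mem_univ v, h⟩)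

lemma realization_singleton (w : V) :
    realization ({{w}} : Finset (Finset V)) = {Pi.single w 1} := by
  ext f
  rw [mem_singleton_iff]
  constructor
  · rintro ⟨-, hsum, hsupp⟩
    have hzero : ∀ u ≠ w, f u = 0 := fun u hu => by_contra fun h =>
      hu (Finset.mem_singleton.1 (Finset.mem_singleton.1 hsupp ▸
        Finset.mem_filter.2 ⟨Finset.mem_univ u, h⟩))
    rw [Finset.sum_eq_single w (fun u _ => hzero u) (by simp)] at hsum
    ext u
    by_cases hu : u = w
    · simp [hu, hsum]
    · simp [hu, hzero u hu]
  · rintro rfl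
    refine ⟨fun u => ?_, by simp, ?_⟩
    · by_cases hu : u = w <;> simp [hu]
    · convert Finset.mem_singleton_self ({w} : Finset V)
      ext u
      by_cases hu : u = w <;> simp [hu]

end Realization

section Cone

variable {V : Type*} {K : Finset (Finset V)} {v : V}

noncomputable def conePoint (v : V) (s : ℝ) (z : V → ℝ) : V → ℝ :=
  fun u => if u = v then s else (1 - s) * z u

@[simp]
lemma conePoint_apply_self (s : ℝ) (z : V → ℝ) : conePoint v s z v = s := if_pos rfl

lemma conePoint_apply_of_ne {u : V} (hu : u ≠ v) (s : ℝ) (z : V → ℝ) :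
    conePoint v s z u = (1 - s) * z u := if_neg hu

lemma conePoint_one (z z' : V → ℝ) : conePoint v 1 z = conePoint v 1 z' := by
  ext u
  by_cases hu : u = v <;> simp [conePoint, hu]

variable [Fintype V]

lemma conePoint_mem_realization (hK : IsComplex K) {z : V → ℝ}
    (hz : z ∈ realization (lkF K v)) {s : ℝ} (hs : s ∈ I) :
    conePoint v s z ∈ realization K := by
  have hzv := apply_eq_zero_of_mem_realization_lkF hz
  obtain ⟨hz0, hz1, hzK⟩ := hz
  have hsum : ∑ u, conePoint v s z u = 1 := by
    have : conePoint v s z = fun u => (Pi.single v s : V → ℝ) u + (1 - s) * z u := by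
      ext u
      by_cases hu : u = v <;> simp [conePoint, hu, hzv]
    simp [this, Finset.sum_add_distrib, ← Finset.mul_sum, hz1]
  refine mem_realization_of_support_subset hK ⟨fun u => ?_, hsum⟩
    (Finset.mem_filter.1 hzK).2.2 fun u hu => ?_
  · by_cases hu : u = v
    · simp [hu, hs.1]
    · simp [conePoint_apply_of_ne hu, mul_nonneg (sub_nonneg.2 hs.2) (hz0 u)]
  · by_cases huv : u = v
    · simp [huv]
    · rw [conePoint_apply_of_ne huv] at hu
      exact Finset.mem_insert_of_mem
        (Finset.mem_filter.2 ⟨Finset.mem_univ u, right_ne_zero_of_mul hu⟩)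

lemma exists_conePoint_eq (hK : IsComplex K) {x : V → ℝ} (hx : x ∈ realization K)
    (h0 : x v ≠ 0) (h1 : x v ≠ 1) :
    ∃ z ∈ realization (lkF K v), conePoint v (x v) z = x := by
  have hne : 1 - x v ≠ 0 := sub_ne_zero.2 (Ne.symm h1)
  have hpos : 0 < 1 - x v :=
    sub_pos.2 (lt_of_le_of_ne (mem_Icc_of_mem_stdSimplex (realization_subset_stdSimplex hx) v).2 h1)
  set z : V → ℝ := Function.update ((1 - x v)⁻¹ • x) v 0 with hz
  have hzx : conePoint v (x v) z = x := by
    ext u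
    by_cases hu : u = v
    · simp [hu]
    · simp [conePoint_apply_of_ne hu, hz, hu, hne]
  have hsupp : ∀ u, z u ≠ 0 → u ∈ Finset.univ.filter fun u => x u ≠ 0 := by
    intro u hu
    by_cases huv : u = v
    · simp [hz, huv] at hu
    · exact Finset.mem_filter.2 ⟨Finset.mem_univ u, fun h => hu (by simp [hz, huv, h])⟩
  have hzK : z ∈ realization K := by
    refine mem_realization_of_support_subset hK ⟨fun u => ?_, ?_⟩ hx.2.2 hsupp
    · by_cases hu : u = v
      · simp [hz, hu]
      · simp [hz, hu, mul_nonneg (inv_nonneg.2 hpos.le) (hx.1 u)]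
    · rw [hz, Finset.sum_update_of_mem (Finset.mem_univ v)]
      simp [← Finset.mul_sum, Finset.sum_sdiff_eq_sub, hx.2.1, inv_mul_cancel₀ hne]
  refine ⟨z, ⟨hzK.1, hzK.2.1, Finset.mem_filter.2 ⟨hzK.2.2, by simp [hz], ?_⟩⟩, hzx⟩
  refine hK.2 _ hx.2.2 _ (Finset.insert_subset ?_ fun u hu => hsupp u ?_)
    (Finset.insert_nonempty _ _)
  · exact Finset.mem_filter.2 ⟨Finset.mem_univ v, h0⟩
  · exact (Finset.mem_filter.1 hu).2

end Cone

section Star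

variable {V : Type*} [Fintype V] {K : Finset (Finset V)} {v : V}

/-- The cone on the link of `v`, mapped onto the closed star of `v`. -/
noncomputable def starMap (hK : IsComplex K) (v : V) (p : realization (lkF K v) × I) :
    realization K :=
  ⟨conePoint v p.2 p.1, conePoint_mem_realization hK p.1.2 p.2.2⟩

variable (hK : IsComplex K)

@[simp]
lemma starMap_apply_self (p : realization (lkF K v) × I) :
    (starMap hK v p : V → ℝ) v = p.2 :=
  conePoint_apply_self _ _

lemma continuous_starMap : Continuous (starMap hK v) := by
  refine Continuous.subtype_mk (continuous_pi fun u => ?_) _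
  by_cases hu : u = v
  · simp only [conePoint, if_pos hu]
    fun_prop
  · simp only [conePoint, if_neg hu]
    exact (continuous_const.sub (continuous_subtype_val.comp continuous_snd)).mul
      ((continuous_apply u).comp (continuous_subtype_val.comp continuous_fst))

lemma starMap_one (z z' : realization (lkF K v)) : starMap hK v (z, 1) = starMap hK v (z', 1) :=
  Subtype.ext (conePoint_one _ _)

lemma starMap_eq_starMap {p p' : realization (lkF K v) × I}
    (h : starMap hK v p = starMap hK v p') : p.2 = p'.2 ∧ (p.2 = 1 ∨ p.1 = p'.1) := by
  have hs : p.2 = p'.2 :=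
    Subtype.ext (by simpa using congrArg (fun x : realization K => (x : V → ℝ) v) h)
  refine ⟨hs, or_iff_not_imp_left.2 fun h1 => Subtype.ext (funext fun u => ?_)⟩
  by_cases hu : u = v
  · rw [hu, apply_eq_zero_of_mem_realization_lkF p.1.2,
      apply_eq_zero_of_mem_realization_lkF p'.1.2]
  · have hne : (1 : ℝ) - p.2 ≠ 0 := sub_ne_zero.2 fun h => h1 (Subtype.ext h.symm)
    have hu' := congrArg (fun x : realization K => (x : V → ℝ) u) h
    simp only [starMap, conePoint_apply_of_ne hu, ← hs] at hu'
    exact mul_left_cancel₀ hne hu'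

lemma apply_self_eq_zero_or_mem_range_starMap [Nonempty (realization (lkF K v))]
    (x : realization K) : (x : V → ℝ) v = 0 ∨ x ∈ range (starMap hK v) := by
  refine or_iff_not_imp_left.2 fun h0 => ?_
  by_cases h1 : (x : V → ℝ) v = 1
  · obtain ⟨z₀⟩ := ‹Nonempty (realization (lkF K v))›
    refine ⟨(z₀, 1), Subtype.ext (funext fun u => ?_)⟩
    by_cases hu : u = v
    · simp [hu, h1]
    · simp [starMap, conePoint_apply_of_ne hu,
        apply_eq_zero_of_apply_eq_one (realization_subset_stdSimplex x.2) h1 hu]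
  · obtain ⟨z, hz, hzx⟩ := exists_conePoint_eq hK x.2 h0 h1
    have hx1 := mem_Icc_of_mem_stdSimplex (realization_subset_stdSimplex x.2) v
    exact ⟨(⟨z, hz⟩, ⟨_, hx1⟩), Subtype.ext hzx⟩

end Star

section Deformation

variable {V : Type*} [Fintype V] {K : Finset (Finset V)} {v : V}
  {q : realization (lkF K v)}
  (hK : IsComplex K) (G : (ContinuousMap.id (realization (lkF K v))).Homotopy (.const _ q))

/-- First contract the link (it reaches `q` at time `1/2`), then lower the height to `0`. This is
well defined at the apex `s = 1`, whose height stays `1` until the link coordinate is `q`. -/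
noncomputable def starDeformation (t : I) (p : realization (lkF K v) × I) : realization K :=
  starMap hK v (G (p.2 * ramp t, p.1), p.2 * ramp (σ t))

lemma starDeformation_zero (p : realization (lkF K v) × I) :
    starDeformation hK G 0 p = starMap hK v p := by
  simp [starDeformation]

lemma starDeformation_of_snd_eq_zero {p : realization (lkF K v) × I} (hp : p.2 = 0) (t : I) :
    starDeformation hK G t p = starMap hK v p := by
  obtain ⟨z, s⟩ := p
  obtain rfl : s = 0 := hp
  simp [starDeformation]

lemma starDeformation_one_apply_self (p : realization (lkF K v) × I) :
    (starDeformation hK G 1 p : V → ℝ) v = 0 := by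
  simp [starDeformation]

lemma starDeformation_congr {p p' : realization (lkF K v) × I}
    (h : starMap hK v p = starMap hK v p') (t : I) :
    starDeformation hK G t p = starDeformation hK G t p' := by
  obtain ⟨hs, h1 | hz⟩ := starMap_eq_starMap hK h
  · obtain ⟨z, s⟩ := p
    obtain ⟨z', s'⟩ := p'
    obtain rfl : s = 1 := h1
    obtain rfl : s' = 1 := hs.symm
    rcases le_total (t : ℝ) (1 / 2) with ht | ht
    · simp only [starDeformation, one_mul, ramp_of_half_le ((half_le_symm_iff t).2 ht)]
      exact starMap_one hK _ _
    · simp [starDeformation, ramp_of_half_le ht]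
  · simp only [starDeformation, hs, hz]

lemma continuous_starDeformation :
    Continuous fun tp : I × (realization (lkF K v) × I) => starDeformation hK G tp.1 tp.2 := by
  refine (continuous_starMap hK).comp (.prodMk (G.continuous.comp ?_) ?_) <;> fun_prop

noncomputable def deletionDeformation (tx : I × realization K) : realization K :=
  if h : tx.2 ∈ range (starMap hK v) then starDeformation hK G tx.1 h.choose else tx.2

lemma deletionDeformation_of_starMap_eq {p : realization (lkF K v) × I} {x : realization K}
    (hp : starMap hK v p = x) (t : I) :
    deletionDeformation hK G (t, x) = starDeformation hK G t p := by
  have h : x ∈ range (starMap hK v) := ⟨p, hp⟩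
  rw [deletionDeformation, dif_pos h]
  exact starDeformation_congr hK G (h.choose_spec.trans hp.symm) t

lemma deletionDeformation_of_apply_self_eq_zero {x : realization K} (hx : (x : V → ℝ) v = 0)
    (t : I) :
    deletionDeformation hK G (t, x) = x := by
  by_cases h : x ∈ range (starMap hK v)
  · obtain ⟨p, rfl⟩ := h
    rw [deletionDeformation_of_starMap_eq hK G rfl, starDeformation_of_snd_eq_zero]
    simpa using hx
  · rw [deletionDeformation, dif_neg h]

lemma deletionDeformation_zero (x : realization K) : deletionDeformation hK G (0, x) = x := by
  by_cases h : x ∈ range (starMap hK v)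
  · obtain ⟨p, rfl⟩ := h
    rw [deletionDeformation_of_starMap_eq hK G rfl, starDeformation_zero]
  · rw [deletionDeformation, dif_neg h]

variable [Nonempty (realization (lkF K v))]

lemma deletionDeformation_one_apply_self (x : realization K) :
    (deletionDeformation hK G (1, x) : V → ℝ) v = 0 := by
  rcases apply_self_eq_zero_or_mem_range_starMap (v := v) hK x with hx | ⟨p, rfl⟩
  · rwa [deletionDeformation_of_apply_self_eq_zero hK G hx]
  · rw [deletionDeformation_of_starMap_eq hK G rfl, starDeformation_one_apply_self]

lemma continuous_deletionDeformation : Continuous (deletionDeformation hK G) := by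
  have : CompactSpace (realization (lkF K v)) :=
    isCompact_iff_compactSpace.1 (isCompact_realization (hK.lkF v))
  have hcover : {x : realization K | (x : V → ℝ) v = 0} ∪ range (starMap hK v) = univ :=
    eq_univ_of_forall fun x => apply_self_eq_zero_or_mem_range_starMap hK x
  rw [← continuousOn_univ, ← univ_prod_univ, ← hcover, prod_union]
  refine ContinuousOn.union_of_isClosed ?_ ?_ ?_ ?_
  · exact continuous_snd.continuousOn.congr fun tx htx =>
      deletionDeformation_of_apply_self_eq_zero hK G htx.2 tx.1
  · rw [← range_id, ← range_prodMap]
    refine continuousOn_range_of_continuous_comp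
      (continuous_id.prodMap (continuous_starMap hK)) ?_
    convert continuous_starDeformation hK G using 1
    ext1 tp
    exact deletionDeformation_of_starMap_eq hK G rfl tp.1
  · exact isClosed_univ.prod
      (isClosed_eq ((continuous_apply v).comp continuous_subtype_val) continuous_const)
  · exact isClosed_univ.prod (isCompact_range (continuous_starMap hK)).isClosed

end Deformation

theorem contractibleSpace_realization_of_lkF_dlF {V : Type*} [Fintype V]
    {K : Finset (Finset V)} (hK : IsComplex K) (v : V)
    [ContractibleSpace (realization (lkF K v))] [ContractibleSpace (realization (dlF K v))] :
    ContractibleSpace (realization K) := by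
  obtain ⟨q, ⟨G⟩⟩ := id_nullhomotopic (realization (lkF K v))
  let toDeletion : C(realization K, realization (dlF K v)) :=
    ⟨fun x => ⟨deletionDeformation hK G (1, x), mem_realization_dlF_iff.2
      ⟨(deletionDeformation hK G (1, x)).2, deletionDeformation_one_apply_self hK G x⟩⟩,
      (continuous_subtype_val.comp
        ((continuous_deletionDeformation hK G).comp (.prodMk_right 1))).subtype_mk _⟩
  let ofDeletion : C(realization (dlF K v), realization K) :=
    ⟨inclusion (realization_mono (Finset.filter_subset _ _)), continuous_inclusion _⟩
  exact contractibleSpace_of_homotopic_id_comp toDeletion ofDeletion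
    ⟨{ toFun := deletionDeformation hK G
       continuous_toFun := continuous_deletionDeformation hK G
       map_zero_left := deletionDeformation_zero hK G
       map_one_left := fun _ => rfl }⟩

/-- A nonevasive finite simplicial complex is contractible. -/
theorem stmt_18 {V : Type*} [Fintype V] (K : Finset (Finset V)) (hK : IsComplex K)
    (h : Nonevasive K) : ContractibleSpace (realization K) := by
  induction h with
  | point w =>
    rw [realization_singleton]
    infer_instance
  | step K v _ _ _ ihlk ihdl =>
    have := ihlk (hK.lkF v)
    have := ihdl (hK.dlF v)
    exact contractibleSpace_realization_of_lkF_dlF hK v
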